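/- arXiv:1707.02222 — 4 statements merged into one kernel-verified Lean document; each statement's English description precedes it below -/
import Mathlib

section
/- Let M = [[A, B],[Bᴴ, D]] be Hermitian positive semidefinite with D possibly singular, and suppose the null space (kernel) of D is contained in the null space of B (i.e., Dv = 0 implies Bv = 0). Then rank(M) = rank(D) + rank(A − B D⁺ Bᴴ), where D⁺ is the Moore–Penrose pseudoinverse. -/
open Matrix ComplexOrder

/-!
As `M` is Hermitian, so are `D` and `D⁺`. Since `D (D⁺D - 1) = 0`, the columns of `D⁺D - 1` lie
in `ker D ⊆ ker B`, so `B D⁺ D = B`, and taking adjoints `D D⁺ Bᴴ = Bᴴ`. Hence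
`M = [[1, BD⁺], [0, 1]] * diag(A - BD⁺Bᴴ, D) * [[1, 0], [D⁺Bᴴ, 1]]`, with unipotent outer factors,
and the rank of a block-diagonal matrix is the sum of the ranks of its blocks.
-/

/-- `P` is the Moore–Penrose pseudoinverse of `D`. -/
def IsMoorePenroseInv {m n : ℕ} (D : Matrix (Fin m) (Fin n) ℂ)
    (P : Matrix (Fin n) (Fin m) ℂ) : Prop :=
  D * P * D = D ∧ P * D * P = P ∧ (D * P)ᴴ = D * P ∧ (P * D)ᴴ = P * D

namespace Submodule

variable {K V W : Type*} [DivisionRing K] [AddCommGroup V] [Module K V] [AddCommGroup W]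
  [Module K W]

def prodEquivProd (p : Submodule K V) (q : Submodule K W) : (p.prod q) ≃ₗ[K] p × q where
  toFun x := (⟨x.1.1, x.2.1⟩, ⟨x.1.2, x.2.2⟩)
  invFun y := ⟨(y.1, y.2), y.1.2, y.2.2⟩
  map_add' _ _ := rfl
  map_smul' _ _ := rfl
  left_inv _ := rfl
  right_inv _ := rfl

theorem finrank_prod (p : Submodule K V) (q : Submodule K W) [FiniteDimensional K p]
    [FiniteDimensional K q] :
    Module.finrank K (p.prod q) = Module.finrank K p + Module.finrank K q := by
  rw [(prodEquivProd p q).finrank_eq, Module.finrank_prod]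

end Submodule

namespace Matrix

theorem mul_eq_self_of_ker_le {R l m n : Type*} [Ring R] [Fintype n] {B : Matrix l n R}
    {D : Matrix m n R} {Q : Matrix n n R} (hker : ∀ v, D *ᵥ v = 0 → B *ᵥ v = 0)
    (hQ : D * Q = D) : B * Q = B := by
  refine ext_iff_mulVec.2 fun v => ?_
  have hD : D *ᵥ (Q *ᵥ v - v) = 0 := by rw [mulVec_sub, mulVec_mulVec, hQ, sub_self]
  rw [← mulVec_mulVec, ← sub_eq_zero, ← mulVec_sub]
  exact hker _ hD

variable {K : Type*} [Field K] {l m n l' m' n' : Type*}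

theorem mulVecLin_fromBlocks_zero_zero [Fintype n] [Fintype n']
    (A : Matrix m n K) (D : Matrix m' n' K) :
    (fromBlocks A 0 0 D).mulVecLin =
      (LinearEquiv.sumArrowLequivProdArrow m m' K K).symm.toLinearMap ∘ₗ
        (A.mulVecLin.prodMap D.mulVecLin) ∘ₗ
          (LinearEquiv.sumArrowLequivProdArrow n n' K K).toLinearMap := by
  ext v i
  rcases i with i | i <;> simp [fromBlocks_mulVec] <;> rfl

theorem rank_fromBlocks_zero_zero [Fintype n] [Fintype n'] (A : Matrix m n K)
    (D : Matrix m' n' K) : (fromBlocks A 0 0 D).rank = A.rank + D.rank := by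
  rw [rank, mulVecLin_fromBlocks_zero_zero, ← LinearMap.comp_assoc,
    LinearMap.range_comp_of_range_eq_top _ (LinearEquiv.range _), LinearMap.range_comp,
    LinearEquiv.finrank_map_eq, LinearMap.range_prodMap, Submodule.finrank_prod, rank, rank]

theorem fromBlocks_eq_mul_fromBlocks_zero_zero_mul [Fintype l] [Fintype m] [DecidableEq l]
    [DecidableEq m] [Fintype l'] [Fintype m'] [DecidableEq l'] [DecidableEq m']
    (A : Matrix l l' K) (D : Matrix m m' K) (X : Matrix l m K) (Y : Matrix m' l' K) :
    fromBlocks A (X * D) (D * Y) D =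
      fromBlocks (1 : Matrix l l K) X 0 (1 : Matrix m m K) * fromBlocks (A - X * D * Y) 0 0 D *
        fromBlocks (1 : Matrix l' l' K) 0 Y (1 : Matrix m' m' K) := by
  simp [fromBlocks_multiply, Matrix.mul_assoc]

theorem rank_fromBlocks_eq_rank_sub_add_rank [Fintype l] [Fintype m] [DecidableEq l]
    [DecidableEq m] [Fintype l'] [Fintype m'] [DecidableEq l'] [DecidableEq m']
    (A : Matrix l l' K) (D : Matrix m m' K) (X : Matrix l m K) (Y : Matrix m' l' K) :
    (fromBlocks A (X * D) (D * Y) D).rank = (A - X * D * Y).rank + D.rank := by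
  rw [fromBlocks_eq_mul_fromBlocks_zero_zero_mul, rank_mul_eq_left_of_isUnit_det,
    rank_mul_eq_right_of_isUnit_det, rank_fromBlocks_zero_zero] <;> simp

end Matrix

namespace IsMoorePenroseInv

variable {m n : ℕ} {D : Matrix (Fin m) (Fin n) ℂ} {P Q : Matrix (Fin n) (Fin m) ℂ}

theorem conjTranspose (h : IsMoorePenroseInv D P) : IsMoorePenroseInv Dᴴ Pᴴ := by
  obtain ⟨h₁, h₂, h₃, h₄⟩ := h
  refine ⟨?_, ?_, ?_, ?_⟩
  · rw [← conjTranspose_mul, ← conjTranspose_mul, ← Matrix.mul_assoc, h₁]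
  · rw [← conjTranspose_mul, ← conjTranspose_mul, ← Matrix.mul_assoc, h₂]
  · rw [← conjTranspose_mul, conjTranspose_conjTranspose, h₄]
  · rw [← conjTranspose_mul, conjTranspose_conjTranspose, h₃]

theorem unique (hP : IsMoorePenroseInv D P) (hQ : IsMoorePenroseInv D Q) : P = Q := by
  obtain ⟨hP₁, hP₂, hP₃, hP₄⟩ := hP
  obtain ⟨hQ₁, hQ₂, hQ₃, hQ₄⟩ := hQ
  have hDP : D * P = D * Q :=
    calc D * P = (D * Q * D * P)ᴴ := by rw [hQ₁, hP₃]
      _ = D * P * (D * Q) := by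
        rw [Matrix.mul_assoc (D * Q), conjTranspose_mul, hP₃, hQ₃]
      _ = D * Q := by rw [← Matrix.mul_assoc, hP₁]
  have hPD : P * D = Q * D :=
    calc P * D = (P * (D * Q * D))ᴴ := by rw [hQ₁, hP₄]
      _ = Q * D * (P * D) := by
        rw [Matrix.mul_assoc D, ← Matrix.mul_assoc, conjTranspose_mul, hP₄, hQ₄]
      _ = Q * D := by rw [Matrix.mul_assoc, ← Matrix.mul_assoc D, hP₁]
  calc P = Q * D * P := by rw [← hPD, hP₂]
    _ = Q := by rw [Matrix.mul_assoc, hDP, ← Matrix.mul_assoc, hQ₂]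

theorem isHermitian {D : Matrix (Fin n) (Fin n) ℂ} {P : Matrix (Fin n) (Fin n) ℂ}
    (hD : D.IsHermitian) (h : IsMoorePenroseInv D P) : P.IsHermitian := by
  have h' := h.conjTranspose
  rw [hD.eq] at h'
  exact h'.unique h

end IsMoorePenroseInv

/-- Generalized Schur complement rank additivity: if `M = [[A,B],[Bᴴ,D]]` is
Hermitian positive semidefinite with (possibly singular) `D` whose kernel is
contained in the kernel of `B`, then
`rank M = rank D + rank (A − B D⁺ Bᴴ)` for the Moore–Penrose pseudoinverse `D⁺`. -/
theorem generalized_schur_complement_rank_additivity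
    (r d : ℕ) (A : Matrix (Fin r) (Fin r) ℂ) (B : Matrix (Fin r) (Fin d) ℂ)
    (D : Matrix (Fin d) (Fin d) ℂ) (Dp : Matrix (Fin d) (Fin d) ℂ)
    (hM : (Matrix.fromBlocks A B Bᴴ D).PosSemidef)
    (hker : ∀ v : Fin d → ℂ, D.mulVec v = 0 → B.mulVec v = 0)
    (hDp : IsMoorePenroseInv D Dp) :
    (Matrix.fromBlocks A B Bᴴ D).rank = D.rank + (A - B * Dp * Bᴴ).rank := by
  have hD : D.IsHermitian := (isHermitian_fromBlocks_iff.1 hM.isHermitian).2.2.2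
  have hB : B * Dp * D = B := by
    rw [Matrix.mul_assoc]
    exact mul_eq_self_of_ker_le hker (by rw [← Matrix.mul_assoc, hDp.1])
  have hC : D * (Dp * Bᴴ) = Bᴴ :=
    calc D * (Dp * Bᴴ) = (B * Dp * D)ᴴ := by
          rw [conjTranspose_mul, conjTranspose_mul, hD.eq, (hDp.isHermitian hD).eq]
      _ = Bᴴ := by rw [hB]
  have hSchur : B * Dp * D * (Dp * Bᴴ) = B * Dp * Bᴴ := by
    rw [← Matrix.mul_assoc, Matrix.mul_assoc B Dp D, Matrix.mul_assoc B, hDp.2.1]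
  have h := rank_fromBlocks_eq_rank_sub_add_rank A D (B * Dp) (Dp * Bᴴ)
  rw [hSchur, hB, hC] at h
  rw [h, add_comm]
end

section
/- Let A, B be r×r Hermitian positive definite matrices and denote by λ_i(AB^{-1}) the i-th largest eigenvalue of AB^{-1} (equivalently the i-th largest generalized eigenvalue of the pair (A,B)). Then for all valid indices: λ_{k+i}(A)/λ_{k+1}(B) ≤ λ_i(AB^{-1}) ≤ λ_1(A)/λ_{r−i+1}(B), and also λ_i(AB^{-1}) ≤ λ_i(A)/λ_r(B). -/
/-!
With `S = √B` we have `A = S M S` and `B = S S`, so `yᴴ A y = (S y)ᴴ M (S y)` and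
`yᴴ B y = ‖S y‖²`. For a Hermitian matrix, the eigenvectors of the `i + 1` largest eigenvalues
span a subspace on which the Rayleigh quotient is at least `λᵢ`, and those of the `r - i`
smallest span one on which it is at most `λᵢ`. Choosing such subspaces for `A`, for `M` (pulled
back along `S`) and for `B` so that their dimensions add up to more than `2r`, they share a
nonzero vector `y`, and chaining the three Rayleigh bounds along `y` gives each inequality.
-/

open Matrix ComplexOrder
open scoped MatrixOrder

/-- The `i`-th largest value of a tuple `f : Fin n → ℝ` (0-indexed: `i = 0`
gives the largest). -/
noncomputable def ithLargest {n : ℕ} (f : Fin n → ℝ) (i : Fin n) : ℝ :=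
  (f ∘ Tuple.sort f) i.rev

open Finset Module

theorem succ_le_card_filter_ithLargest_le {n : ℕ} (f : Fin n → ℝ) (i : Fin n) :
    (i : ℕ) + 1 ≤ #{l | ithLargest f i ≤ f l} := by
  have hcard : #(Ici i.rev) = (i : ℕ) + 1 := by rw [Fin.card_Ici, Fin.val_rev]; omega
  rw [← hcard]
  refine card_le_card_of_injOn (Tuple.sort f)
    (fun a ha => mem_filter.mpr ⟨mem_univ _, Tuple.monotone_sort f (mem_Ici.mp ha)⟩)
    (Tuple.sort f).injective.injOn

theorem sub_le_card_filter_le_ithLargest {n : ℕ} (f : Fin n → ℝ) (i : Fin n) :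
    n - i ≤ #{l | f l ≤ ithLargest f i} := by
  have hcard : #(Iic i.rev) = n - i := by rw [Fin.card_Iic, Fin.val_rev]; omega
  rw [← hcard]
  refine card_le_card_of_injOn (Tuple.sort f)
    (fun a ha => mem_filter.mpr ⟨mem_univ _, Tuple.monotone_sort f (mem_Iic.mp ha)⟩)
    (Tuple.sort f).injective.injOn

section Dimension

variable {K V : Type*} [DivisionRing K] [AddCommGroup V] [Module K V] [FiniteDimensional K V]

theorem Submodule.finrank_add_finrank_le_finrank_add_finrank_inf (s t : Submodule K V) :
    finrank K s + finrank K t ≤ finrank K V + finrank K ↥(s ⊓ t) := by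
  rw [← Submodule.finrank_sup_add_finrank_inf_eq]
  exact Nat.add_le_add_right (Submodule.finrank_le _) _

theorem Submodule.exists_ne_zero_mem_of_two_mul_finrank_lt (s t u : Submodule K V)
    (h : 2 * finrank K V < finrank K s + finrank K t + finrank K u) :
    ∃ x ≠ 0, x ∈ s ∧ x ∈ t ∧ x ∈ u := by
  have hst := finrank_add_finrank_le_finrank_add_finrank_inf s t
  have hstu := finrank_add_finrank_le_finrank_add_finrank_inf (s ⊓ t) u
  have hne : s ⊓ t ⊓ u ≠ ⊥ := by
    intro hbot
    rw [hbot, finrank_bot] at hstu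
    omega
  obtain ⟨x, hx, hx0⟩ := Submodule.exists_mem_ne_zero_of_ne_bot hne
  simp only [Submodule.mem_inf] at hx
  exact ⟨x, hx0, hx.1.1, hx.1.2, hx.2⟩

theorem Submodule.finrank_le_finrank_comap_of_surjective {W : Type*} [AddCommGroup W]
    [Module K W] {f : V →ₗ[K] W} (hf : Function.Surjective f) (p : Submodule K W) :
    finrank K p ≤ finrank K (p.comap f) := by
  conv_lhs => rw [← p.map_comap_eq_of_surjective hf]
  exact Submodule.finrank_map_le f _

end Dimension

theorem Matrix.exists_ne_zero_mem_and_mulVec_mem {K n : Type*} [Field K] [Fintype n]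
    [DecidableEq n] {S : Matrix n n K} (hS : IsUnit S) (U V W : Submodule K (n → K))
    (h : 2 * Fintype.card n < finrank K U + finrank K V + finrank K W) :
    ∃ y ≠ 0, y ∈ U ∧ S *ᵥ y ∈ V ∧ y ∈ W := by
  have hV := Submodule.finrank_le_finrank_comap_of_surjective (f := S.mulVecLin)
    (mulVec_surjective_iff_isUnit.mpr hS) V
  exact Submodule.exists_ne_zero_mem_of_two_mul_finrank_lt U (V.comap S.mulVecLin) W
    (by rw [finrank_fintype_fun_eq_card]; omega)

theorem LinearMap.exists_card_le_finrank_forall_apply_eq_zero {K n : Type*} [Field K]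
    [Fintype n] (g : (n → K) →ₗ[K] (n → K)) (s : Finset n) :
    ∃ W : Submodule K (n → K), #s ≤ finrank K W ∧ ∀ x ∈ W, ∀ l ∉ s, g x l = 0 := by
  classical
  let restrict := LinearMap.funLeft K K (Subtype.val : ↥(sᶜ : Finset n) → n) ∘ₗ g
  refine ⟨LinearMap.ker restrict, ?_, fun x hx l hl => congr_fun hx ⟨l, mem_compl.mpr hl⟩⟩
  have hrank := LinearMap.finrank_range_add_finrank_ker restrict
  have hrange : finrank K (LinearMap.range restrict) ≤ Fintype.card n - #s := by
    simpa [card_compl] using Submodule.finrank_le (LinearMap.range restrict)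
  simp only [finrank_fintype_fun_eq_card] at hrank
  have := s.card_le_univ
  omega

theorem Matrix.star_mulVec_dotProduct_mulVec_mulVec {R n : Type*} [CommRing R] [StarRing R]
    [Fintype n] (S N : Matrix n n R) (x : n → R) :
    star (S *ᵥ x) ⬝ᵥ (N *ᵥ (S *ᵥ x)) = star x ⬝ᵥ ((Sᴴ * N * S) *ᵥ x) := by
  rw [star_mulVec, ← dotProduct_mulVec, mulVec_mulVec, mulVec_mulVec, Matrix.mul_assoc]

theorem Matrix.re_star_dotProduct_diagonal_mulVec {𝕜 n : Type*} [RCLike 𝕜] [Fintype n]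
    [DecidableEq n] (d : n → ℝ) (y : n → 𝕜) :
    RCLike.re (star y ⬝ᵥ (diagonal (RCLike.ofReal ∘ d) *ᵥ y)) = ∑ l, d l * ‖y l‖ ^ 2 := by
  simp only [dotProduct, mulVec_diagonal, map_sum]
  refine sum_congr rfl fun l _ => ?_
  rw [Pi.star_apply, Function.comp_apply, mul_left_comm, RCLike.star_def, RCLike.conj_mul]
  norm_cast

namespace Matrix.IsHermitian

variable {𝕜 n : Type*} [RCLike 𝕜] [Fintype n] [DecidableEq n] {H : Matrix n n 𝕜}

theorem re_star_dotProduct_mulVec_eq_sum (hH : H.IsHermitian) (x : n → 𝕜) :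
    RCLike.re (star x ⬝ᵥ (H *ᵥ x)) =
      ∑ l, hH.eigenvalues l * ‖(star (hH.eigenvectorUnitary : Matrix n n 𝕜) *ᵥ x) l‖ ^ 2 := by
  set U : Matrix n n 𝕜 := ↑hH.eigenvectorUnitary
  have hU : U * star U = 1 := Unitary.mul_star_self_of_mem hH.eigenvectorUnitary.2
  have hU' : star U * U = 1 := Unitary.star_mul_self_of_mem hH.eigenvectorUnitary.2
  have hx : x = U *ᵥ (star U *ᵥ x) := by rw [mulVec_mulVec, hU, one_mulVec]
  have hD : Uᴴ * H * U = diagonal (RCLike.ofReal ∘ hH.eigenvalues) := by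
    conv_lhs => rw [hH.spectral_theorem, Unitary.conjStarAlgAut_apply]
    rw [← star_eq_conjTranspose, ← Matrix.mul_assoc, ← Matrix.mul_assoc, hU', Matrix.one_mul,
      Matrix.mul_assoc, hU', Matrix.mul_one]
  rw [← re_star_dotProduct_diagonal_mulVec, ← hD, ← star_mulVec_dotProduct_mulVec_mulVec, ← hx]

theorem re_star_dotProduct_self_eq_sum (hH : H.IsHermitian) (x : n → 𝕜) :
    RCLike.re (star x ⬝ᵥ x) =
      ∑ l, ‖(star (hH.eigenvectorUnitary : Matrix n n 𝕜) *ᵥ x) l‖ ^ 2 := by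
  set U : Matrix n n 𝕜 := ↑hH.eigenvectorUnitary
  have hU : U * star U = 1 := Unitary.mul_star_self_of_mem hH.eigenvectorUnitary.2
  calc RCLike.re (star x ⬝ᵥ x) = RCLike.re (star (star U *ᵥ x) ⬝ᵥ (1 *ᵥ (star U *ᵥ x))) := by
        rw [star_mulVec_dotProduct_mulVec_mulVec, Matrix.mul_one, ← star_eq_conjTranspose,
          star_star, hU, one_mulVec]
    _ = _ := by simpa using re_star_dotProduct_diagonal_mulVec (𝕜 := 𝕜) 1 (star U *ᵥ x)

theorem exists_card_le_finrank_and_mul_le_re_dotProduct (hH : H.IsHermitian) (c : ℝ) :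
    ∃ W : Submodule 𝕜 (n → 𝕜), #{l | c ≤ hH.eigenvalues l} ≤ finrank 𝕜 W ∧
      ∀ x ∈ W, c * RCLike.re (star x ⬝ᵥ x) ≤ RCLike.re (star x ⬝ᵥ (H *ᵥ x)) := by
  obtain ⟨W, hW, hcoord⟩ := (star (hH.eigenvectorUnitary : Matrix n n 𝕜)).mulVecLin
    |>.exists_card_le_finrank_forall_apply_eq_zero {l | c ≤ hH.eigenvalues l}
  refine ⟨W, hW, fun x hx => ?_⟩
  rw [re_star_dotProduct_self_eq_sum hH, re_star_dotProduct_mulVec_eq_sum hH, mul_sum]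
  refine sum_le_sum fun l _ => ?_
  by_cases hl : c ≤ hH.eigenvalues l
  · exact mul_le_mul_of_nonneg_right hl (by positivity)
  · have hzero : (star (hH.eigenvectorUnitary : Matrix n n 𝕜) *ᵥ x) l = 0 :=
      hcoord x hx l (by simpa using hl)
    simp [hzero]

theorem exists_card_le_finrank_and_re_dotProduct_le_mul (hH : H.IsHermitian) (c : ℝ) :
    ∃ W : Submodule 𝕜 (n → 𝕜), #{l | hH.eigenvalues l ≤ c} ≤ finrank 𝕜 W ∧
      ∀ x ∈ W, RCLike.re (star x ⬝ᵥ (H *ᵥ x)) ≤ c * RCLike.re (star x ⬝ᵥ x) := by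
  obtain ⟨W, hW, hcoord⟩ := (star (hH.eigenvectorUnitary : Matrix n n 𝕜)).mulVecLin
    |>.exists_card_le_finrank_forall_apply_eq_zero {l | hH.eigenvalues l ≤ c}
  refine ⟨W, hW, fun x hx => ?_⟩
  rw [re_star_dotProduct_self_eq_sum hH, re_star_dotProduct_mulVec_eq_sum hH, mul_sum]
  refine sum_le_sum fun l _ => ?_
  by_cases hl : hH.eigenvalues l ≤ c
  · exact mul_le_mul_of_nonneg_right hl (by positivity)
  · have hzero : (star (hH.eigenvectorUnitary : Matrix n n 𝕜) *ᵥ x) l = 0 :=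
      hcoord x hx l (by simpa using hl)
    simp [hzero]

end Matrix.IsHermitian

namespace Matrix.IsHermitian

variable {𝕜 : Type*} [RCLike 𝕜] {r : ℕ} {H : Matrix (Fin r) (Fin r) 𝕜}

theorem exists_succ_le_finrank_and_ithLargest_mul_le (hH : H.IsHermitian) (i : Fin r) :
    ∃ W : Submodule 𝕜 (Fin r → 𝕜), (i : ℕ) + 1 ≤ finrank 𝕜 W ∧ ∀ x ∈ W,
      ithLargest hH.eigenvalues i * RCLike.re (star x ⬝ᵥ x) ≤ RCLike.re (star x ⬝ᵥ (H *ᵥ x)) :=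
  (hH.exists_card_le_finrank_and_mul_le_re_dotProduct _).imp fun _ hW =>
    ⟨(succ_le_card_filter_ithLargest_le _ i).trans hW.1, hW.2⟩

theorem exists_sub_le_finrank_and_le_ithLargest_mul (hH : H.IsHermitian) (i : Fin r) :
    ∃ W : Submodule 𝕜 (Fin r → 𝕜), r - i ≤ finrank 𝕜 W ∧ ∀ x ∈ W,
      RCLike.re (star x ⬝ᵥ (H *ᵥ x)) ≤ ithLargest hH.eigenvalues i * RCLike.re (star x ⬝ᵥ x) :=
  (hH.exists_card_le_finrank_and_re_dotProduct_le_mul _).imp fun _ hW =>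
    ⟨(sub_le_card_filter_le_ithLargest _ i).trans hW.1, hW.2⟩

end Matrix.IsHermitian

section Congruence

variable {𝕜 : Type*} [RCLike 𝕜] {r : ℕ} {A B M S : Matrix (Fin r) (Fin r) 𝕜}

theorem ithLargest_eigenvalues_le_mul_of_conjTranspose_mul_mul_eq (hA : A.IsHermitian)
    (hB : B.IsHermitian) (hM : M.PosSemidef) (hS : IsUnit S) (hSMS : Sᴴ * M * S = A)
    (hSS : Sᴴ * S = B) {i k j : Fin r} (hj : (i : ℕ) + k ≤ j) :
    ithLargest hA.eigenvalues j ≤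
      ithLargest hM.isHermitian.eigenvalues i * ithLargest hB.eigenvalues k := by
  obtain ⟨WA, hWA, hqA⟩ := hA.exists_succ_le_finrank_and_ithLargest_mul_le j
  obtain ⟨WM, hWM, hqM⟩ := hM.isHermitian.exists_sub_le_finrank_and_le_ithLargest_mul i
  obtain ⟨WB, hWB, hqB⟩ := hB.exists_sub_le_finrank_and_le_ithLargest_mul k
  obtain ⟨y, hy0, hyA, hyM, hyB⟩ :=
    exists_ne_zero_mem_and_mulVec_mem hS WA WM WB (by rw [Fintype.card_fin]; omega)
  have hy : 0 < RCLike.re (star y ⬝ᵥ y) :=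
    (RCLike.pos_iff.mp (dotProduct_star_self_pos_iff.mpr hy0)).1
  have hqSy : star (S *ᵥ y) ⬝ᵥ (S *ᵥ y) = star y ⬝ᵥ (B *ᵥ y) := by
    simpa [hSS] using star_mulVec_dotProduct_mulVec_mulVec S 1 y
  refine le_of_mul_le_mul_right ?_ hy
  calc ithLargest hA.eigenvalues j * RCLike.re (star y ⬝ᵥ y)
      ≤ RCLike.re (star y ⬝ᵥ (A *ᵥ y)) := hqA y hyA
    _ = RCLike.re (star (S *ᵥ y) ⬝ᵥ (M *ᵥ (S *ᵥ y))) := by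
      rw [star_mulVec_dotProduct_mulVec_mulVec, hSMS]
    _ ≤ ithLargest hM.isHermitian.eigenvalues i * RCLike.re (star y ⬝ᵥ (B *ᵥ y)) := by
      rw [← hqSy]; exact hqM _ hyM
    _ ≤ ithLargest hM.isHermitian.eigenvalues i *
          (ithLargest hB.eigenvalues k * RCLike.re (star y ⬝ᵥ y)) :=
      mul_le_mul_of_nonneg_left (hqB y hyB) (hM.eigenvalues_nonneg _)
    _ = _ := (mul_assoc _ _ _).symm

theorem mul_ithLargest_eigenvalues_le_of_conjTranspose_mul_mul_eq (hA : A.IsHermitian)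
    (hB : B.IsHermitian) (hM : M.PosSemidef) (hS : IsUnit S) (hSMS : Sᴴ * M * S = A)
    (hSS : Sᴴ * S = B) {i k j : Fin r} (hj : r - 1 + j ≤ (i : ℕ) + k) :
    ithLargest hM.isHermitian.eigenvalues i * ithLargest hB.eigenvalues k ≤
      ithLargest hA.eigenvalues j := by
  obtain ⟨WA, hWA, hqA⟩ := hA.exists_sub_le_finrank_and_le_ithLargest_mul j
  obtain ⟨WM, hWM, hqM⟩ := hM.isHermitian.exists_succ_le_finrank_and_ithLargest_mul_le i
  obtain ⟨WB, hWB, hqB⟩ := hB.exists_succ_le_finrank_and_ithLargest_mul_le k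
  obtain ⟨y, hy0, hyA, hyM, hyB⟩ :=
    exists_ne_zero_mem_and_mulVec_mem hS WA WM WB (by rw [Fintype.card_fin]; omega)
  have hy : 0 < RCLike.re (star y ⬝ᵥ y) :=
    (RCLike.pos_iff.mp (dotProduct_star_self_pos_iff.mpr hy0)).1
  have hqSy : star (S *ᵥ y) ⬝ᵥ (S *ᵥ y) = star y ⬝ᵥ (B *ᵥ y) := by
    simpa [hSS] using star_mulVec_dotProduct_mulVec_mulVec S 1 y
  refine le_of_mul_le_mul_right ?_ hy
  calc ithLargest hM.isHermitian.eigenvalues i * ithLargest hB.eigenvalues k *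
        RCLike.re (star y ⬝ᵥ y)
      = ithLargest hM.isHermitian.eigenvalues i *
          (ithLargest hB.eigenvalues k * RCLike.re (star y ⬝ᵥ y)) := mul_assoc _ _ _
    _ ≤ ithLargest hM.isHermitian.eigenvalues i * RCLike.re (star y ⬝ᵥ (B *ᵥ y)) :=
      mul_le_mul_of_nonneg_left (hqB y hyB) (hM.eigenvalues_nonneg _)
    _ ≤ RCLike.re (star (S *ᵥ y) ⬝ᵥ (M *ᵥ (S *ᵥ y))) := by
      rw [← hqSy]; exact hqM _ hyM
    _ = RCLike.re (star y ⬝ᵥ (A *ᵥ y)) := by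
      rw [star_mulVec_dotProduct_mulVec_mulVec, hSMS]
    _ ≤ ithLargest hA.eigenvalues j * RCLike.re (star y ⬝ᵥ y) := hqA y hyA

end Congruence

/-- Eigenvalue bounds for generalized eigenvalues of a pair `(A,B)` of
Hermitian positive definite matrices: `AB⁻¹` is similar to the Hermitian
matrix `M = B^{-1/2} A B^{-1/2}` (characterized by `√B * M * √B = A`), and its
`i`-th largest eigenvalue `λ_i(AB⁻¹)` satisfies (1-indexed)
`λ_{k+i}(A)/λ_{k+1}(B) ≤ λ_i(AB⁻¹) ≤ λ_1(A)/λ_{r−i+1}(B)` and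
`λ_i(AB⁻¹) ≤ λ_i(A)/λ_r(B)`. -/
theorem generalized_eigenvalue_bounds
    (r : ℕ) (A B : Matrix (Fin r) (Fin r) ℂ)
    (hA : A.PosDef) (hB : B.PosDef)
    (M : Matrix (Fin r) (Fin r) ℂ) (hM : M.IsHermitian)
    (hMsim : CFC.sqrt B * M * CFC.sqrt B = A) :
    (∀ i k : Fin r, ∀ h : (i : ℕ) + (k : ℕ) < r,
      ithLargest (hA.1.eigenvalues) ⟨(i : ℕ) + (k : ℕ), h⟩ /
        ithLargest (hB.1.eigenvalues) k ≤ ithLargest (hM.eigenvalues) i) ∧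
    (∀ i : Fin r,
      ithLargest (hM.eigenvalues) i ≤
        ithLargest (hA.1.eigenvalues) ⟨0, i.pos⟩ /
          ithLargest (hB.1.eigenvalues) i.rev) ∧
    (∀ i : Fin r,
      ithLargest (hM.eigenvalues) i ≤
        ithLargest (hA.1.eigenvalues) i /
          ithLargest (hB.1.eigenvalues) ⟨r - 1, by have := i.pos; omega⟩) := by
  set S := CFC.sqrt B
  have hB0 : 0 ≤ B := hB.posSemidef.nonneg
  have hSH : Sᴴ = S := (CFC.sqrt_nonneg B).posSemidef.1
  have hSS : Sᴴ * S = B := by rw [hSH]; exact CFC.sqrt_mul_sqrt_self B hB0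
  have hSMS : Sᴴ * M * S = A := by rw [hSH]; exact hMsim
  have hS : IsUnit S := (CFC.isUnit_sqrt_iff B hB0).mpr hB.isUnit
  have hMpos : M.PosDef := (Matrix.IsUnit.posDef_star_left_conjugate_iff hS).mp
    (by rwa [star_eq_conjTranspose, hSMS])
  have hBpos (k : Fin r) : 0 < ithLargest hB.1.eigenvalues k := hB.eigenvalues_pos _
  refine ⟨fun i k h => ?_, fun i => ?_, fun i => ?_⟩
  · rw [div_le_iff₀ (hBpos k)]
    exact ithLargest_eigenvalues_le_mul_of_conjTranspose_mul_mul_eq hA.1 hB.1 hMpos.posSemidef hS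
      hSMS hSS le_rfl
  · rw [le_div_iff₀ (hBpos _)]
    exact mul_ithLargest_eigenvalues_le_of_conjTranspose_mul_mul_eq hA.1 hB.1 hMpos.posSemidef hS
      hSMS hSS (by simp only [Fin.val_rev]; omega)
  · rw [le_div_iff₀ (hBpos _)]
    exact mul_ithLargest_eigenvalues_le_of_conjTranspose_mul_mul_eq hA.1 hB.1 hMpos.posSemidef hS
      hSMS hSS (Nat.add_comm _ _).le
end

section
/- For positive reals λ_i ≥ 1 (i = 1,...,r) and any choice of positive quantization variances σ_i > 0, the quantity max( Σ_i log₂(λ_i(σ_i+1)/(σ_i+λ_i)), Σ_i log₂((σ_i+1)/σ_i) ) is minimized, term by term, by the choice σ_i = λ_i/(λ_i−1) when λ_i > 1 (and σ_i → ∞ when λ_i = 1), yielding the per-term bound max(log₂(λ_i(σ_i+1)/(σ_i+λ_i)), log₂((σ_i+1)/σ_i)) = log₂(2 − 1/λ_i) ≤ 1. -/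
/-!
For `λ ≥ 1` the ratio `λ(σ+1)/(σ+λ)` is increasing in `σ > 0` and `(σ+1)/σ` is decreasing, so
the larger of their logarithms is never below the value at a crossing point. The two ratios
cross where `σ + λ = σλ`, i.e. at `σ = λ/(λ-1)`, and there both equal `2 - 1/λ ≤ 2`.
For `λ = 1` the first ratio is identically `1` and the second tends to `1`.
-/

open Real Filter Set Topology

theorem min_le_max_of_monotoneOn_of_antitoneOn {α β : Type*} [LinearOrder α] [LinearOrder β]
    {f g : α → β} {s : Set α} {a x : α} (hf : MonotoneOn f s) (hg : AntitoneOn g s)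
    (ha : a ∈ s) (hx : x ∈ s) : min (f a) (g a) ≤ max (f x) (g x) := by
  rcases le_total a x with h | h
  · exact (min_le_left _ _).trans (le_max_of_le_left (hf ha hx h))
  · exact (min_le_right _ _).trans (le_max_of_le_right (hg hx ha h))

theorem monotoneOn_logb_mul_add_one_div_add {b lam : ℝ} (hb : 1 < b) (hlam : 1 ≤ lam) :
    MonotoneOn (fun σ => logb b (lam * (σ + 1) / (σ + lam))) (Ioi 0) := by
  intro x (hx : 0 < x) y (hy : 0 < y) hxy
  have hlam0 : 0 < lam := by linarith
  refine logb_le_logb_of_le hb (by positivity) ?_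
  rw [div_le_div_iff₀ (by positivity) (by positivity)]
  nlinarith [mul_nonneg (sub_nonneg.2 hxy) (sub_nonneg.2 hlam)]

theorem antitoneOn_logb_add_one_div {b : ℝ} (hb : 1 < b) :
    AntitoneOn (fun σ => logb b ((σ + 1) / σ)) (Ioi 0) := by
  intro x (hx : 0 < x) y (hy : 0 < y) hxy
  refine logb_le_logb_of_le hb (by positivity) ?_
  rw [div_le_div_iff₀ hy hx]
  nlinarith

theorem mul_add_one_div_add_eq_add_one_div {σ lam : ℝ} (hcross : σ + lam = σ * lam)
    (hlam : lam ≠ 0) : lam * (σ + 1) / (σ + lam) = (σ + 1) / σ := by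
  rw [hcross, mul_comm σ, mul_div_mul_left _ _ hlam]

theorem add_one_div_eq_two_sub_one_div {σ lam : ℝ} (hcross : σ + lam = σ * lam)
    (hσ : σ ≠ 0) (hlam : lam ≠ 0) : (σ + 1) / σ = 2 - 1 / lam := by
  field_simp
  linarith

theorem logb_two_sub_one_div_le_one {lam : ℝ} (hlam : 1 / 2 < lam) :
    logb 2 (2 - 1 / lam) ≤ 1 := by
  have hlam0 : 0 < lam := by linarith
  have hpos : 0 < 2 - 1 / lam := by
    rw [sub_pos, div_lt_iff₀ hlam0]
    linarith
  calc logb 2 (2 - 1 / lam) ≤ logb 2 2 :=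
        logb_le_logb_of_le one_lt_two hpos (by simp only [sub_le_self_iff]; positivity)
    _ = 1 := logb_self_eq_one one_lt_two

theorem tendsto_add_div_add_atTop (a b : ℝ) :
    Tendsto (fun x : ℝ => (x + a) / (x + b)) atTop (𝓝 1) := by
  have hlim : Tendsto (fun x : ℝ => (1 + a * x⁻¹) / (1 + b * x⁻¹)) atTop
      (𝓝 ((1 + a * 0) / (1 + b * 0))) :=
    ((tendsto_inv_atTop_zero.const_mul a).const_add 1).div
      ((tendsto_inv_atTop_zero.const_mul b).const_add 1) (by simp)
  rw [mul_zero, mul_zero, add_zero, div_one] at hlim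
  refine hlim.congr' ?_
  filter_upwards [eventually_gt_atTop 0] with x hx
  field_simp

theorem tendsto_max_logb_mul_add_one_div_add_logb_add_one_div {b lam : ℝ} (hlam : lam ≠ 0) :
    Tendsto (fun σ : ℝ => max (logb b (lam * (σ + 1) / (σ + lam))) (logb b ((σ + 1) / σ)))
      atTop (𝓝 (max (logb b lam) 0)) := by
  have hfirst : Tendsto (fun σ : ℝ => lam * (σ + 1) / (σ + lam)) atTop (𝓝 lam) := by
    simpa only [mul_div_assoc, mul_one] using (tendsto_add_div_add_atTop 1 lam).const_mul lam
  have hsecond : Tendsto (fun σ : ℝ => (σ + 1) / σ) atTop (𝓝 1) := by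
    simpa only [add_zero] using tendsto_add_div_add_atTop 1 0
  rw [← logb_one (b := b)]
  exact ((continuousAt_logb hlam).tendsto.comp hfirst).max
    ((continuousAt_logb one_ne_zero).tendsto.comp hsecond)

/-- Per-term optimization in the constant-gap proof: for `λ > 1` the choice
`σ = λ/(λ−1)` minimizes `max(log₂(λ(σ+1)/(σ+λ)), log₂((σ+1)/σ))` over `σ > 0`,
with optimal value `log₂(2 − 1/λ) ≤ 1`; and for `λ = 1` the value tends to
`log₂(2 − 1/λ) = 0` as `σ → ∞`. -/
theorem constant_gap_per_term_optimization :
    (∀ lam : ℝ, 1 < lam →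
      ∀ σStar : ℝ, σStar = lam / (lam - 1) →
        (0 < σStar ∧
         max (logb 2 (lam * (σStar + 1) / (σStar + lam)))
             (logb 2 ((σStar + 1) / σStar)) = logb 2 (2 - 1 / lam) ∧
         logb 2 (2 - 1 / lam) ≤ 1 ∧
         ∀ σ : ℝ, 0 < σ →
           logb 2 (2 - 1 / lam) ≤
             max (logb 2 (lam * (σ + 1) / (σ + lam)))
                 (logb 2 ((σ + 1) / σ)))) ∧
    (∀ lam : ℝ, lam = 1 →
      Tendsto (fun σ : ℝ =>
          max (logb 2 (lam * (σ + 1) / (σ + lam)))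
              (logb 2 ((σ + 1) / σ)))
        atTop (nhds (logb 2 (2 - 1 / lam)))) := by
  refine ⟨fun lam hlam σStar hσStar => ?_, fun lam hlam => ?_⟩
  · have hlam0 : lam ≠ 0 := by positivity
    have hσStar_pos : 0 < σStar := hσStar ▸ div_pos (by linarith) (by linarith)
    have hcross : σStar + lam = σStar * lam := by
      rw [hσStar]
      field_simp [sub_ne_zero.2 hlam.ne']
      ring
    have hfirst := mul_add_one_div_add_eq_add_one_div hcross hlam0
    have hsecond := add_one_div_eq_two_sub_one_div hcross hσStar_pos.ne' hlam0
    refine ⟨hσStar_pos, by rw [hfirst, hsecond, max_self],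
      logb_two_sub_one_div_le_one (by linarith), fun σ hσ => ?_⟩
    have hmin := min_le_max_of_monotoneOn_of_antitoneOn
      (monotoneOn_logb_mul_add_one_div_add one_lt_two hlam.le)
      (antitoneOn_logb_add_one_div one_lt_two) hσStar_pos hσ
    rwa [hfirst, min_self, hsecond] at hmin
  · subst hlam
    rw [show (2 : ℝ) - 1 / 1 = 1 by norm_num]
    simpa using tendsto_max_logb_mul_add_one_div_add_logb_add_one_div (b := 2) one_ne_zero
end

section
/- For μ ∈ (0,1), fixed positive definite matrices A ⪰ B ≻ 0 (A = S_{Y_R|Y_D}, B = S_{Y_R|Y_D,X}), the function g(Q) = (1−μ)·log det(A + Q) + μ·log det(Q) − log det(B + Q), over Hermitian positive definite Q, when restricted via the change of variables Q̂ = CᴴQC (with C simultaneously diagonalizing: CᴴBC = I, CᴴAC = Λ diagonal), is maximized by a diagonal Q̂; i.e., restricting Q̂ to be diagonal incurs no loss of optimality. -/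
/-!
After the congruence `Q ↦ CᴴQC` the Lagrangian becomes
`(1 - μ) log det (Λ + X) + μ log det X - log det (1 + X)`: the `log |det C|²` terms cancel because
the weights sum to zero. Writing `Λ = 1 + SᴴS` with `S` diagonal and `P = (1 + X)⁻¹`, it equals
`(1 - μ) log det (1 + S P Sᴴ) + μ log det (1 - P)`, a nonnegative combination of log-determinants
of positive definite matrices. By Hadamard's inequality both can only grow when `P` is replaced by
its diagonal part, and the diagonal part of `P` is `(1 + D)⁻¹` for a positive diagonal `D`.
-/

open Matrix ComplexOrder Real RCLike

lemma RCLike.log_re_mul_of_pos {𝕜 : Type*} [RCLike 𝕜] {a b : 𝕜} (ha : 0 < a) (hb : 0 < b) :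
    log (re (a * b)) = log (re a) + log (re b) := by
  obtain ⟨ha, ha'⟩ := pos_iff.mp ha
  rw [mul_re, ha', zero_mul, sub_zero, log_mul ha.ne' (pos_iff.mp hb).1.ne']

namespace Matrix

lemma diagonal_diag_one_sub {n R : Type*} [DecidableEq n] [Ring R] (P : Matrix n n R) :
    diagonal (1 - P).diag = 1 - diagonal P.diag := by
  ext i j
  by_cases h : i = j
  · subst h; simp
  · simp [h, one_apply_ne h]

lemma diagonal_diag_one_add_diagonal_mul_mul {n R : Type*} [Fintype n] [DecidableEq n]
    [CommRing R] [StarRing R] (s : n → R) (P : Matrix n n R) :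
    diagonal (1 + diagonal s * P * (diagonal s)ᴴ).diag
      = 1 + diagonal s * diagonal P.diag * (diagonal s)ᴴ := by
  ext i j
  by_cases h : i = j
  · subst h; simp [diagonal_conjTranspose, mul_diagonal, diagonal_mul]
  · simp [diagonal_conjTranspose, h, one_apply_ne h]

lemma conjTranspose_mul_mul_conjTranspose_inv_mul_mul_inv {n R : Type*} [Fintype n]
    [DecidableEq n] [CommRing R] [StarRing R] {C : Matrix n n R} (hC : IsUnit C)
    (D : Matrix n n R) : Cᴴ * ((C⁻¹)ᴴ * D * C⁻¹) * C = D := by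
  have hCC : C⁻¹ * C = 1 := nonsing_inv_mul C ((isUnit_iff_isUnit_det C).mp hC)
  rw [← Matrix.mul_assoc, ← Matrix.mul_assoc, ← conjTranspose_mul, hCC, conjTranspose_one,
    Matrix.one_mul, Matrix.mul_assoc, hCC, Matrix.mul_one]

variable {n 𝕜 : Type*} [Fintype n] [DecidableEq n] [RCLike 𝕜]

lemma PosDef.re_det_pos {M : Matrix n n 𝕜} (hM : M.PosDef) : 0 < re M.det :=
  (pos_iff.mp hM.det_pos).1

lemma log_re_det_conjTranspose_mul_mul {C X : Matrix n n 𝕜} (hC : C.det ≠ 0)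
    (hX : re X.det ≠ 0) :
    log (re (Cᴴ * X * C).det) = log (‖C.det‖ ^ 2) + log (re X.det) := by
  rw [det_mul, det_mul, det_conjTranspose, mul_right_comm, star_def, RCLike.conj_mul,
    ← ofReal_pow, re_ofReal_mul, log_mul (by simpa using hC) hX]

lemma PosSemidef.re_det_le_exp_re_trace_sub_card {N : Matrix n n 𝕜} (hN : N.PosSemidef) :
    re N.det ≤ exp (re N.trace - Fintype.card n) := by
  rw [hN.1.det_eq_prod_eigenvalues, hN.1.trace_eq_sum_eigenvalues, ← ofReal_prod, ← ofReal_sum,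
    ofReal_re, ofReal_re]
  calc ∏ i, hN.1.eigenvalues i ≤ ∏ i, exp (hN.1.eigenvalues i - 1) :=
        Finset.prod_le_prod (fun i _ => hN.eigenvalues_nonneg i)
          fun i _ => by linarith [add_one_le_exp (hN.1.eigenvalues i - 1)]
    _ = exp (∑ i, hN.1.eigenvalues i - Fintype.card n) := by
        rw [← exp_sum, Finset.sum_sub_distrib]; simp

lemma PosSemidef.prod_sq_mul_re_det_le {M : Matrix n n 𝕜} (hM : M.PosSemidef) (s : n → ℝ) :
    (∏ i, s i) ^ 2 * re M.det ≤ exp (∑ i, s i ^ 2 * re (M i i) - Fintype.card n) := by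
  set D : Matrix n n 𝕜 := diagonal fun i => (s i : 𝕜)
  have hD : Dᴴ = D := by simp [D, diagonal_conjTranspose, Pi.star_def]
  have hN := hM.conjTranspose_mul_mul_same D
  rw [hD] at hN
  convert hN.re_det_le_exp_re_trace_sub_card using 2
  · rw [det_mul, det_mul, det_diagonal, ← ofReal_prod, mul_right_comm, ← ofReal_mul,
      re_ofReal_mul, sq]
  · simp only [D, trace, diag_apply, mul_diagonal, diagonal_mul, map_sum, mul_re, ofReal_re,
      ofReal_im, mul_im, zero_mul, mul_zero, sub_zero, add_zero, sub_left_inj]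
    exact Finset.sum_congr rfl fun i _ => by ring

theorem PosDef.re_det_le_prod_re_diag {M : Matrix n n 𝕜} (hM : M.PosDef) :
    re M.det ≤ ∏ i, re (M i i) := by
  have hdiag : ∀ i, 0 < re (M i i) := fun i => (pos_iff.mp hM.diag_pos).1
  have hprod : 0 < ∏ i, re (M i i) := Finset.prod_pos fun i _ => hdiag i
  -- rescale `M` to unit diagonal, where the trace bound reads `det ≤ 1`
  have h := hM.posSemidef.prod_sq_mul_re_det_le fun i => √(re (M i i))⁻¹
  simp only [← Finset.prod_pow, sq_sqrt (inv_nonneg.mpr (hdiag _).le),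
    inv_mul_cancel₀ (hdiag _).ne', Finset.sum_const, Finset.card_univ, nsmul_one, sub_self,
    exp_zero, Finset.prod_inv_distrib] at h
  rwa [inv_mul_le_iff₀ hprod, mul_one] at h

theorem PosDef.re_det_le_re_det_diagonal_diag {M : Matrix n n 𝕜} (hM : M.PosDef) :
    re M.det ≤ re (diagonal M.diag).det := by
  rw [det_diagonal, ← hM.1.coe_re_diag, ← ofReal_prod, ofReal_re]
  exact hM.re_det_le_prod_re_diag

lemma PosDef.one_sub_inv_one_add {X : Matrix n n 𝕜} (hX : X.PosDef) :
    (1 - (1 + X)⁻¹).PosDef := by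
  have hXu : IsUnit X.det := (isUnit_iff_isUnit_det X).mp hX.isUnit
  have h1Xu : IsUnit (1 + X).det := (isUnit_iff_isUnit_det _).mp (PosDef.one.add hX).isUnit
  have h : (1 - (1 + X)⁻¹) * (1 + X⁻¹) = 1 := by
    rw [show 1 + X⁻¹ = (1 + X) * X⁻¹ by rw [add_mul, one_mul, mul_nonsing_inv _ hXu, add_comm],
      ← Matrix.mul_assoc, sub_mul, nonsing_inv_mul _ h1Xu, one_mul, add_sub_cancel_left,
      mul_nonsing_inv _ hXu]
  rw [← inv_eq_left_inv h]
  exact (PosDef.one.add hX.inv).inv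

lemma diagonal_ofReal_eq_one_add_conjTranspose_mul_self {w : n → ℝ} (hw : ∀ i, 1 ≤ w i) :
    diagonal (fun i => (w i : 𝕜))
      = 1 + (diagonal fun i => (√(w i - 1) : 𝕜))ᴴ * diagonal fun i => (√(w i - 1) : 𝕜) := by
  rw [diagonal_conjTranspose, ← diagonal_one, diagonal_mul_diagonal, diagonal_add]
  congr 1
  funext i
  rw [Pi.star_apply, star_def, conj_ofReal, ← ofReal_mul, mul_self_sqrt (sub_nonneg.2 (hw i))]
  push_cast
  ring

end Matrix

section QuantizationLagrangian

variable {n 𝕜 : Type*} [Fintype n] [DecidableEq n] [RCLike 𝕜]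

noncomputable def quantizationLagrangian (μ : ℝ) (A B Q : Matrix n n 𝕜) : ℝ :=
  (1 - μ) * log (re (A + Q).det) + μ * log (re Q.det) - log (re (B + Q).det)

theorem quantizationLagrangian_conjTranspose_mul_mul (μ : ℝ) {A B Q C : Matrix n n 𝕜}
    (hC : C.det ≠ 0) (hA : A.PosSemidef) (hB : B.PosSemidef) (hQ : Q.PosDef) :
    quantizationLagrangian μ (Cᴴ * A * C) (Cᴴ * B * C) (Cᴴ * Q * C)
      = quantizationLagrangian μ A B Q := by
  have hconj : ∀ M : Matrix n n 𝕜, Cᴴ * M * C + Cᴴ * Q * C = Cᴴ * (M + Q) * C := fun M => by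
    rw [Matrix.mul_add, Matrix.add_mul]
  rw [quantizationLagrangian, quantizationLagrangian, hconj, hconj,
    log_re_det_conjTranspose_mul_mul hC (PosDef.posSemidef_add hA hQ).re_det_pos.ne',
    log_re_det_conjTranspose_mul_mul hC hQ.re_det_pos.ne',
    log_re_det_conjTranspose_mul_mul hC (PosDef.posSemidef_add hB hQ).re_det_pos.ne']
  ring

theorem quantizationLagrangian_one_add_conjTranspose_mul_self (μ : ℝ) (S : Matrix n n 𝕜)
    {X : Matrix n n 𝕜} (hX : X.PosDef) :
    quantizationLagrangian μ (1 + Sᴴ * S) 1 X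
      = (1 - μ) * log (re (1 + S * (1 + X)⁻¹ * Sᴴ).det) + μ * log (re (1 - (1 + X)⁻¹).det) := by
  have h1X : (1 + X).PosDef := PosDef.one.add hX
  have hP : (1 + X)⁻¹ * (1 + X) = 1 :=
    nonsing_inv_mul _ ((isUnit_iff_isUnit_det _).mp h1X.isUnit)
  have hSPS : (1 + S * (1 + X)⁻¹ * Sᴴ).PosDef :=
    PosDef.one.add_posSemidef (h1X.inv.posSemidef.mul_mul_conjTranspose_same S)
  have hdetA : (1 + Sᴴ * S + X).det = (1 + S * (1 + X)⁻¹ * Sᴴ).det * (1 + X).det := by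
    rw [det_one_add_mul_comm, ← det_mul, Matrix.add_mul, Matrix.one_mul, Matrix.mul_assoc,
      Matrix.mul_assoc, hP, Matrix.mul_one, add_right_comm]
  have hdetQ : X.det = (1 - (1 + X)⁻¹).det * (1 + X).det := by
    rw [← det_mul, sub_mul, hP, Matrix.one_mul, add_sub_cancel_left]
  rw [quantizationLagrangian, hdetA, hdetQ, log_re_mul_of_pos hSPS.det_pos h1X.det_pos,
    log_re_mul_of_pos hX.one_sub_inv_one_add.det_pos h1X.det_pos]
  ring

theorem exists_diagonal_quantizationLagrangian_ge {μ : ℝ} (hμ : μ ∈ Set.Icc (0 : ℝ) 1)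
    (s : n → 𝕜) {X : Matrix n n 𝕜} (hX : X.PosDef) :
    ∃ d : n → ℝ, (∀ i, 0 < d i) ∧
      quantizationLagrangian μ (1 + (diagonal s)ᴴ * diagonal s) 1 X
        ≤ quantizationLagrangian μ (1 + (diagonal s)ᴴ * diagonal s) 1
          (diagonal fun i => (d i : 𝕜)) := by
  set P := (1 + X)⁻¹
  have hP : P.PosDef := (PosDef.one.add hX).inv
  have h1P : (1 - P).PosDef := hX.one_sub_inv_one_add
  have hp0 : ∀ i, 0 < re (P i i) := fun i => (pos_iff.mp hP.diag_pos).1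
  have hp1 : ∀ i, re (P i i) < 1 := fun i => by
    simpa using (pos_iff.mp (h1P.diag_pos (i := i))).1
  have hd : ∀ i, 0 < (re (P i i))⁻¹ - 1 := fun i => sub_pos.2 ((one_lt_inv₀ (hp0 i)).2 (hp1 i))
  refine ⟨fun i => (re (P i i))⁻¹ - 1, hd, ?_⟩
  have hD : (diagonal fun i => (((re (P i i))⁻¹ - 1 : ℝ) : 𝕜)).PosDef :=
    posDef_diagonal_iff.mpr fun i => ofReal_pos.mpr (hd i)
  have hPD : (1 + diagonal fun i => (((re (P i i))⁻¹ - 1 : ℝ) : 𝕜))⁻¹ = diagonal P.diag := by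
    refine inv_eq_left_inv ?_
    rw [← hP.1.coe_re_diag, ← diagonal_one, diagonal_add, diagonal_mul_diagonal]
    congr 1
    funext i
    simp only [diag_apply]
    push_cast
    rw [add_sub_cancel, mul_inv_cancel₀ (ofReal_ne_zero.mpr (hp0 i).ne')]
  rw [quantizationLagrangian_one_add_conjTranspose_mul_self μ _ hX,
    quantizationLagrangian_one_add_conjTranspose_mul_self μ _ hD, hPD]
  have hSPS : (1 + diagonal s * P * (diagonal s)ᴴ).PosDef :=
    PosDef.one.add_posSemidef (hP.posSemidef.mul_mul_conjTranspose_same _)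
  have hdet₁ := hSPS.re_det_le_re_det_diagonal_diag
  have hdet₂ := h1P.re_det_le_re_det_diagonal_diag
  rw [diagonal_diag_one_add_diagonal_mul_mul] at hdet₁
  rw [diagonal_diag_one_sub] at hdet₂
  exact add_le_add
    (mul_le_mul_of_nonneg_left (log_le_log hSPS.re_det_pos hdet₁) (by linarith [hμ.2]))
    (mul_le_mul_of_nonneg_left (log_le_log h1P.re_det_pos hdet₂) hμ.1)

end QuantizationLagrangian

/-- Restricting the transformed quantization covariance `Q̂ = CᴴQC` to be
diagonal incurs no loss of optimality in maximizing the Lagrangian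
`g(Q) = (1−μ)·log det(A+Q) + μ·log det Q − log det(B+Q)` over Hermitian
positive definite `Q`, where `C` simultaneously diagonalizes `B` to `I` and
`A` to a diagonal `Λ`. -/
theorem diagonal_quantization_no_loss
    (r : ℕ) (μ : ℝ) (hμ : μ ∈ Set.Ioo (0:ℝ) 1)
    (A B C : Matrix (Fin r) (Fin r) ℂ) (lam : Fin r → ℝ)
    (hA : A.PosDef) (hB : B.PosDef) (hAB : (A - B).PosSemidef)
    (hC : IsUnit C) (hCB : Cᴴ * B * C = 1)
    (hCA : Cᴴ * A * C = Matrix.diagonal (fun i => (lam i : ℂ)))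
    (g : Matrix (Fin r) (Fin r) ℂ → ℝ)
    (hg : g = fun Q => (1 - μ) * Real.log ((A + Q).det.re)
        + μ * Real.log (Q.det.re) - Real.log ((B + Q).det.re)) :
    ∀ Q : Matrix (Fin r) (Fin r) ℂ, Q.PosDef →
      ∃ dvec : Fin r → ℝ, (∀ i, 0 < dvec i) ∧
        g Q ≤ g ((C⁻¹)ᴴ * Matrix.diagonal (fun i => (dvec i : ℂ)) * C⁻¹) := by
  intro Q hQ
  have hlam : ∀ i, 1 ≤ lam i := fun i => by
    have h := hAB.conjTranspose_mul_mul_same C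
    rw [Matrix.mul_sub, Matrix.sub_mul, hCA, hCB, ← diagonal_one, diagonal_sub,
      posSemidef_diagonal_iff] at h
    exact sub_nonneg.1 (by exact_mod_cast h i)
  replace hCA := hCA.trans (diagonal_ofReal_eq_one_add_conjTranspose_mul_self (𝕜 := ℂ) hlam)
  obtain ⟨d, hd, hle⟩ := exists_diagonal_quantizationLagrangian_ge ⟨hμ.1.le, hμ.2.le⟩ _
    (hQ.conjTranspose_mul_mul_same (mulVec_injective_of_isUnit hC))
  refine ⟨d, hd, ?_⟩
  set D := diagonal fun i => (d i : ℂ)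
  have hQ' : ((C⁻¹)ᴴ * D * C⁻¹).PosDef :=
    (posDef_diagonal_iff.mpr fun i => ofReal_pos.mpr (hd i)).conjTranspose_mul_mul_same
      (mulVec_injective_of_isUnit (isUnit_nonsing_inv_iff.mpr hC))
  have hCdet : C.det ≠ 0 := ((isUnit_iff_isUnit_det C).mp hC).ne_zero
  subst hg
  change quantizationLagrangian μ A B Q ≤ quantizationLagrangian μ A B ((C⁻¹)ᴴ * D * C⁻¹)
  rwa [← quantizationLagrangian_conjTranspose_mul_mul μ hCdet hA.posSemidef hB.posSemidef hQ,
    ← quantizationLagrangian_conjTranspose_mul_mul μ hCdet hA.posSemidef hB.posSemidef hQ', hCA,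
    hCB, conjTranspose_mul_mul_conjTranspose_inv_mul_mul_inv hC]
end
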